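/- Let λ be a σ-finite measure on ℝ^p, T = (T_1,…,T_d) : ℝ^p → ℝ^d and h : ℝ^p → [0,∞) Borel measurable, and let A ⊆ ℝ^p be Borel. Assume that for every a ∈ ℝ^d with a ≠ 0 and every b ∈ ℝ, λ({x ∈ A : h(x) > 0 and ⟨a,T(x)⟩ ≠ b}) > 0. Let P be a probability measure on ℝ^p with P(A) > 0 and ∫_A |T_j| dP < ∞ for every j. Define D := {θ ∈ ℝ^d : ∫_{ℝ^p} exp(⟨θ,T(x)⟩)·h(x) λ(dx) < ∞}, and for θ ∈ D set P_θ(A) := (∫_A exp(⟨θ,T⟩)·h dλ)/(∫_{ℝ^p} exp(⟨θ,T⟩)·h dλ) and M(θ) := ⟨θ, ∫_A T dP⟩ − P(A)·log ∫_A exp(⟨θ,T⟩)·h dλ. Let α > 0 and suppose θ̂ ∈ D satisfies P_{θ̂}(A) > α and M(θ̂) ≥ M(θ) for every θ ∈ D with P_θ(A) ≥ α. Then θ̂ is the unique maximizer of M over {θ ∈ D : P_θ(A) ≥ α}, and moreover M(θ̂) ≥ M(θ) for every θ ∈ D (it also solves the unconstrained problem). -/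
import Mathlib


open MeasureTheory Set Filter
open scoped Topology
open scoped ENNReal

noncomputable section

/-- The partition function on a set `B`: `Z_B(θ) = ∫_B exp(⟨θ, T x⟩) h x dλ(x)`. -/
def partZ {p d : ℕ} (lam : Measure (EuclideanSpace ℝ (Fin p)))
    (T : EuclideanSpace ℝ (Fin p) → Fin d → ℝ) (h : EuclideanSpace ℝ (Fin p) → ℝ)
    (B : Set (EuclideanSpace ℝ (Fin p))) (θ : Fin d → ℝ) : ℝ≥0∞ :=
  ∫⁻ x in B, ENNReal.ofReal (Real.exp (∑ j, θ j * T x j) * h x) ∂lam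

/-- `P_θ(A) = Z_A(θ) / Z_{ℝ^p}(θ)` for the exponential family. -/
def expFamProb {p d : ℕ} (lam : Measure (EuclideanSpace ℝ (Fin p)))
    (T : EuclideanSpace ℝ (Fin p) → Fin d → ℝ) (h : EuclideanSpace ℝ (Fin p) → ℝ)
    (A : Set (EuclideanSpace ℝ (Fin p))) (θ : Fin d → ℝ) : ℝ :=
  (partZ lam T h A θ).toReal / (partZ lam T h Set.univ θ).toReal

/-- The expected truncated log-likelihood (up to an additive constant)
`M(θ) = ⟨θ, ∫_A T dP⟩ − P(A) · log Z_A(θ)`. -/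
def truncM {p d : ℕ} (lam : Measure (EuclideanSpace ℝ (Fin p)))
    (T : EuclideanSpace ℝ (Fin p) → Fin d → ℝ) (h : EuclideanSpace ℝ (Fin p) → ℝ)
    (A : Set (EuclideanSpace ℝ (Fin p))) (P : Measure (EuclideanSpace ℝ (Fin p)))
    (θ : Fin d → ℝ) : ℝ :=
  (∑ j, θ j * ∫ x in A, T x j ∂P) - (P A).toReal * Real.log (partZ lam T h A θ).toReal

lemma cs_aux {α : Type*} [MeasurableSpace α] (μ : Measure α)
    (u v w : α → ℝ) (hu : Measurable u) (hv : Measurable v) (hw : Measurable w)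
    (hw0 : ∀ x, 0 ≤ w x)
    (Zu Zv Zm : ℝ≥0∞)
    (hZu : Zu = ∫⁻ x, ENNReal.ofReal (Real.exp (u x) * w x) ∂μ)
    (hZv : Zv = ∫⁻ x, ENNReal.ofReal (Real.exp (v x) * w x) ∂μ)
    (hZm : Zm = ∫⁻ x, ENNReal.ofReal (Real.exp ((u x + v x)/2) * w x) ∂μ)
    (hZut : Zu ≠ ⊤) (hZvt : Zv ≠ ⊤) (hZv0 : Zv ≠ 0) :
    Zm ≠ ⊤ ∧ Zm.toReal ^ 2 ≤ Zu.toReal * Zv.toReal ∧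
      (Zm.toReal ^ 2 = Zu.toReal * Zv.toReal →
        ∀ᵐ x ∂μ, Zv.toReal * (Real.exp (u x / 2) * Real.sqrt (w x))
          = Zm.toReal * (Real.exp (v x / 2) * Real.sqrt (w x))) := by
  set F : α → ℝ := fun x => Real.exp (u x / 2) * Real.sqrt (w x) with hFdef
  set G : α → ℝ := fun x => Real.exp (v x / 2) * Real.sqrt (w x) with hGdef
  have hF : Measurable F := (Real.measurable_exp.comp (hu.div_const 2)).mul hw.sqrt
  have hG : Measurable G := (Real.measurable_exp.comp (hv.div_const 2)).mul hw.sqrt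
  have hF0 : ∀ x, 0 ≤ F x := fun x => mul_nonneg (Real.exp_pos _).le (Real.sqrt_nonneg _)
  have hG0 : ∀ x, 0 ≤ G x := fun x => mul_nonneg (Real.exp_pos _).le (Real.sqrt_nonneg _)
  have hFsq : ∀ x, F x ^ 2 = Real.exp (u x) * w x := by
    intro x
    have h1 : Real.exp (u x / 2) ^ 2 = Real.exp (u x) := by
      rw [sq, ← Real.exp_add]; ring_nf
    rw [hFdef]; simp only
    rw [mul_pow, h1, Real.sq_sqrt (hw0 x)]
  have hGsq : ∀ x, G x ^ 2 = Real.exp (v x) * w x := by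
    intro x
    have h1 : Real.exp (v x / 2) ^ 2 = Real.exp (v x) := by
      rw [sq, ← Real.exp_add]; ring_nf
    rw [hGdef]; simp only
    rw [mul_pow, h1, Real.sq_sqrt (hw0 x)]
  have hFGm : ∀ x, F x * G x = Real.exp ((u x + v x)/2) * w x := by
    intro x
    have h2 : Real.sqrt (w x) * Real.sqrt (w x) = w x := Real.mul_self_sqrt (hw0 x)
    have h1 : Real.exp (u x / 2) * Real.exp (v x / 2) = Real.exp ((u x + v x)/2) := by
      rw [← Real.exp_add]; ring_nf
    calc F x * G x = (Real.exp (u x/2) * Real.exp (v x/2)) * (Real.sqrt (w x) * Real.sqrt (w x)) := by ring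
    _ = _ := by rw [h1, h2]
  have hiF2 : Integrable (fun x => F x ^ 2) μ := by
    refine ⟨(hF.pow_const 2).aestronglyMeasurable, ?_⟩
    rw [hasFiniteIntegral_iff_ofReal (ae_of_all _ fun x => sq_nonneg _)]
    have : (∫⁻ x, ENNReal.ofReal (F x ^ 2) ∂μ) = Zu := by
      rw [hZu]; exact lintegral_congr fun x => by rw [hFsq]
    rw [this]; exact hZut.lt_top
  have hiG2 : Integrable (fun x => G x ^ 2) μ := by
    refine ⟨(hG.pow_const 2).aestronglyMeasurable, ?_⟩
    rw [hasFiniteIntegral_iff_ofReal (ae_of_all _ fun x => sq_nonneg _)]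
    have : (∫⁻ x, ENNReal.ofReal (G x ^ 2) ∂μ) = Zv := by
      rw [hZv]; exact lintegral_congr fun x => by rw [hGsq]
    rw [this]; exact hZvt.lt_top
  have hiFG : Integrable (fun x => F x * G x) μ := by
    refine Integrable.mono (hiF2.add hiG2) (hF.mul hG).aestronglyMeasurable ?_
    filter_upwards with x
    simp only [Pi.add_apply]
    rw [Real.norm_eq_abs, Real.norm_eq_abs,
      abs_of_nonneg (mul_nonneg (hF0 x) (hG0 x)),
      abs_of_nonneg (by positivity : (0:ℝ) ≤ F x ^ 2 + G x ^ 2)]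
    nlinarith [sq_nonneg (F x - G x), mul_nonneg (hF0 x) (hG0 x)]
  have hZmt : Zm ≠ ⊤ := by
    rw [hZm]
    refine ne_of_lt (lt_of_le_of_lt ?_ (?_ : Zu + Zv < ⊤))
    · calc (∫⁻ x, ENNReal.ofReal (Real.exp ((u x + v x)/2) * w x) ∂μ)
          = ∫⁻ x, ENNReal.ofReal (F x * G x) ∂μ := lintegral_congr fun x => by rw [hFGm]
      _ ≤ ∫⁻ x, (ENNReal.ofReal (F x ^ 2) + ENNReal.ofReal (G x ^ 2)) ∂μ := by
          refine lintegral_mono fun x => ?_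
          dsimp only
          rw [← ENNReal.ofReal_add (sq_nonneg _) (sq_nonneg _)]
          apply ENNReal.ofReal_le_ofReal
          nlinarith [sq_nonneg (F x - G x), mul_nonneg (hF0 x) (hG0 x)]
      _ = (∫⁻ x, ENNReal.ofReal (F x ^ 2) ∂μ) + ∫⁻ x, ENNReal.ofReal (G x ^ 2) ∂μ :=
          lintegral_add_left (ENNReal.measurable_ofReal.comp (hF.pow_const 2)) _
      _ = Zu + Zv := by
          rw [hZu, hZv]
          congr 1
          · exact lintegral_congr fun x => by rw [hFsq]
          · exact lintegral_congr fun x => by rw [hGsq]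
    · exact ENNReal.add_lt_top.mpr ⟨hZut.lt_top, hZvt.lt_top⟩
  have hIF : ∫ x, F x ^ 2 ∂μ = Zu.toReal := by
    rw [integral_eq_lintegral_of_nonneg_ae (ae_of_all _ fun x => sq_nonneg _)
      (hF.pow_const 2).aestronglyMeasurable, hZu]
    congr 1; exact lintegral_congr fun x => by rw [hFsq]
  have hIG : ∫ x, G x ^ 2 ∂μ = Zv.toReal := by
    rw [integral_eq_lintegral_of_nonneg_ae (ae_of_all _ fun x => sq_nonneg _)
      (hG.pow_const 2).aestronglyMeasurable, hZv]
    congr 1; exact lintegral_congr fun x => by rw [hGsq]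
  have hIFG : ∫ x, F x * G x ∂μ = Zm.toReal := by
    rw [integral_eq_lintegral_of_nonneg_ae (ae_of_all _ fun x => mul_nonneg (hF0 x) (hG0 x))
      (hF.mul hG).aestronglyMeasurable, hZm]
    congr 1; exact lintegral_congr fun x => by rw [hFGm]
  set zu := Zu.toReal
  set zv := Zv.toReal
  set zm := Zm.toReal
  have hzv : 0 < zv := ENNReal.toReal_pos hZv0 hZvt
  set q : α → ℝ := fun x => (zv * F x - zm * G x) ^ 2 with hqdef
  have hq : ∀ x, q x = zv^2 * F x^2 - 2*zv*zm*(F x * G x) + zm^2 * G x^2 := fun x => by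
    rw [hqdef]; ring
  have hiq : Integrable q μ :=
    (((hiF2.const_mul (zv^2)).sub (hiFG.const_mul (2*zv*zm))).add
      (hiG2.const_mul (zm^2))).congr (ae_of_all _ fun x => (hq x).symm)
  have hIq : ∫ x, q x ∂μ = zv * (zv * zu - zm^2) := by
    calc ∫ x, q x ∂μ
        = ∫ x, (zv^2 * F x^2 - 2*zv*zm*(F x * G x) + zm^2 * G x^2) ∂μ :=
          integral_congr_ae (ae_of_all _ fun x => hq x)
      _ = (zv^2 * (∫ x, F x ^2 ∂μ) - 2*zv*zm*(∫ x, F x * G x ∂μ)) + zm^2 * ∫ x, G x^2 ∂μ := by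
          have hsub : Integrable (fun x => zv^2 * F x^2 - 2*zv*zm*(F x * G x)) μ :=
            (hiF2.const_mul (zv^2)).sub (hiFG.const_mul (2*zv*zm))
          rw [integral_add hsub (hiG2.const_mul _),
            integral_sub (hiF2.const_mul _) (hiFG.const_mul _),
            integral_const_mul, integral_const_mul, integral_const_mul]
      _ = zv * (zv * zu - zm^2) := by rw [hIF, hIG, hIFG]; ring
  have hIq0 : 0 ≤ ∫ x, q x ∂μ := integral_nonneg fun x => sq_nonneg _
  have hcs : zm ^ 2 ≤ zu * zv := by nlinarith
  refine ⟨hZmt, hcs, fun heq => ?_⟩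
  have hzq : ∫ x, q x ∂μ = 0 := by rw [hIq]; nlinarith
  have := (integral_eq_zero_iff_of_nonneg (fun x => sq_nonneg _) hiq).mp hzq
  filter_upwards [this] with x hx
  have : (zv * F x - zm * G x) ^ 2 = 0 := hx
  have h5 : zv * F x - zm * G x = 0 := by
    have := (pow_eq_zero_iff (two_ne_zero)).mp this
    exact this
  show zv * F x = zm * G x
  linarith

lemma conv_ptwise (s u v w : ℝ) (hs0 : 0 ≤ s) (hs1 : s ≤ 1) (hw : 0 ≤ w) :
    ENNReal.ofReal (Real.exp ((1-s)*u + s*v) * w) ≤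
      ENNReal.ofReal (Real.exp u * w) + ENNReal.ofReal (Real.exp v * w) := by
  rw [← ENNReal.ofReal_add (by positivity) (by positivity)]
  apply ENNReal.ofReal_le_ofReal
  have hle : (1-s)*u + s*v ≤ max u v := by
    nlinarith [le_max_left u v, le_max_right u v]
  have h1 : Real.exp ((1-s)*u + s*v) ≤ Real.exp (max u v) := Real.exp_le_exp.mpr hle
  have hm : Real.exp (max u v) ≤ Real.exp u + Real.exp v := by
    rcases max_cases u v with ⟨he, _⟩ | ⟨he, _⟩ <;> rw [he] <;>
      nlinarith [Real.exp_pos u, Real.exp_pos v]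
  nlinarith [Real.exp_pos ((1-s)*u + s*v)]

lemma pos_aux {α : Type*} [MeasurableSpace α] (μ : Measure α)
    (f : α → ℝ≥0∞) (hf : Measurable f) (S : Set α) (hS : 0 < μ S)
    (hSf : ∀ x ∈ S, f x ≠ 0) : 0 < ∫⁻ x, f x ∂μ := by
  by_contra hc
  push_neg at hc
  have h0 : ∫⁻ x, f x ∂μ = 0 := nonpos_iff_eq_zero.mp hc
  have hae := (lintegral_eq_zero_iff hf).mp h0
  have : μ {x | f x ≠ 0} = 0 := hae
  have : μ S = 0 := measure_mono_null (fun x hx => hSf x hx) this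
  exact absurd this hS.ne'

lemma sum_affine {d : ℕ} (θ₀ θ₁ : Fin d → ℝ) (s : ℝ) (Tx : Fin d → ℝ) :
    ∑ j, ((1-s)*θ₀ j + s*θ₁ j) * Tx j
      = (1-s) * ∑ j, θ₀ j * Tx j + s * ∑ j, θ₁ j * Tx j := by
  rw [Finset.mul_sum, Finset.mul_sum, ← Finset.sum_add_distrib]
  exact Finset.sum_congr rfl fun j _ => by ring

lemma sum_mid {d : ℕ} (θ₀ θ₁ : Fin d → ℝ) (Tx : Fin d → ℝ) :
    ∑ j, ((θ₀ j + θ₁ j)/2) * Tx j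
      = ((∑ j, θ₀ j * Tx j) + ∑ j, θ₁ j * Tx j)/2 := by
  rw [← Finset.sum_add_distrib, Finset.sum_div]
  exact Finset.sum_congr rfl fun j _ => by ring

lemma sum_sub' {d : ℕ} (θ₀ θ₁ : Fin d → ℝ) (Tx : Fin d → ℝ) :
    ∑ j, (θ₀ j - θ₁ j) * Tx j = (∑ j, θ₀ j * Tx j) - ∑ j, θ₁ j * Tx j := by
  rw [← Finset.sum_sub_distrib]
  exact Finset.sum_congr rfl fun j _ => by ring

lemma measurable_gfun {p d : ℕ}
    (T : EuclideanSpace ℝ (Fin p) → Fin d → ℝ) (h : EuclideanSpace ℝ (Fin p) → ℝ)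
    (hT : Measurable T) (hh : Measurable h) (θ : Fin d → ℝ) :
    Measurable fun x => ENNReal.ofReal (Real.exp (∑ j, θ j * T x j) * h x) := by
  apply ENNReal.measurable_ofReal.comp
  exact (Real.measurable_exp.comp
    (Finset.measurable_sum _ fun j _ =>
      measurable_const.mul ((measurable_pi_apply j).comp hT))).mul hh

lemma measurable_sumT {p d : ℕ}
    (T : EuclideanSpace ℝ (Fin p) → Fin d → ℝ) (hT : Measurable T) (θ : Fin d → ℝ) :
    Measurable fun x => ∑ j, θ j * T x j :=
  Finset.measurable_sum _ fun j _ => measurable_const.mul ((measurable_pi_apply j).comp hT)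

section mid

variable {p d : ℕ} (lam : Measure (EuclideanSpace ℝ (Fin p)))
    (T : EuclideanSpace ℝ (Fin p) → Fin d → ℝ) (h : EuclideanSpace ℝ (Fin p) → ℝ)

lemma partZ_mono_set (hT : Measurable T) (hh : Measurable h)
    (A : Set (EuclideanSpace ℝ (Fin p))) (θ : Fin d → ℝ) :
    partZ lam T h A θ ≤ partZ lam T h Set.univ θ :=
  lintegral_mono' (Measure.restrict_mono (subset_univ A) le_rfl) le_rfl

lemma mid_aux (hT : Measurable T) (hh : Measurable h) (hh0 : 0 ≤ h)
    (A : Set (EuclideanSpace ℝ (Fin p))) (hA : MeasurableSet A)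
    (P : Measure (EuclideanSpace ℝ (Fin p))) [IsProbabilityMeasure P]
    (hPA : 0 < P A)
    (hposA : ∀ θ : Fin d → ℝ, partZ lam T h A θ ≠ 0)
    (θ₀ θ₁ : Fin d → ℝ)
    (h₀ : partZ lam T h Set.univ θ₀ < ⊤) (h₁ : partZ lam T h Set.univ θ₁ < ⊤) :
    partZ lam T h Set.univ (fun j => (θ₀ j + θ₁ j)/2) < ⊤ ∧
    (truncM lam T h A P θ₀ + truncM lam T h A P θ₁)/2
      ≤ truncM lam T h A P (fun j => (θ₀ j + θ₁ j)/2) ∧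
    ((∀ a : Fin d → ℝ, a ≠ 0 → ∀ b : ℝ,
        0 < lam {x | x ∈ A ∧ 0 < h x ∧ (∑ j, a j * T x j) ≠ b}) → θ₀ ≠ θ₁ →
      (truncM lam T h A P θ₀ + truncM lam T h A P θ₁)/2
        < truncM lam T h A P (fun j => (θ₀ j + θ₁ j)/2)) := by
  set mid : Fin d → ℝ := fun j => (θ₀ j + θ₁ j)/2 with hmid
  -- finiteness on univ
  have hfin : partZ lam T h Set.univ mid < ⊤ := by
    refine lt_of_le_of_lt (le_trans (lintegral_mono fun x => ?_)
      (le_of_eq (lintegral_add_left (measurable_gfun T h hT hh θ₀) _)))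
      (ENNReal.add_lt_top.mpr ⟨h₀, h₁⟩)
    have hs := sum_mid θ₀ θ₁ (T x)
    rw [hmid]
    dsimp only
    rw [hs, show ((∑ j, θ₀ j * T x j) + ∑ j, θ₁ j * T x j)/2
        = (1-(2⁻¹:ℝ))*(∑ j, θ₀ j * T x j) + 2⁻¹*(∑ j, θ₁ j * T x j) by ring]
    exact conv_ptwise _ _ _ _ (by norm_num) (by norm_num) (hh0 x)
  -- apply CS on A
  have hZA0 : partZ lam T h A θ₀ ≠ ⊤ :=
    ((partZ_mono_set lam T h hT hh A θ₀).trans_lt h₀).ne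
  have hZA1 : partZ lam T h A θ₁ ≠ ⊤ :=
    ((partZ_mono_set lam T h hT hh A θ₁).trans_lt h₁).ne
  obtain ⟨hZmt, hcs, heqc⟩ := cs_aux (lam.restrict A)
    (fun x => ∑ j, θ₀ j * T x j) (fun x => ∑ j, θ₁ j * T x j) h
    (measurable_sumT T hT θ₀) (measurable_sumT T hT θ₁) hh hh0
    (partZ lam T h A θ₀) (partZ lam T h A θ₁) (partZ lam T h A mid)
    rfl rfl
    (lintegral_congr fun x => by rw [hmid]; dsimp only; rw [sum_mid θ₀ θ₁ (T x)])
    hZA0 hZA1 (hposA θ₁)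
  set zu := (partZ lam T h A θ₀).toReal
  set zv := (partZ lam T h A θ₁).toReal
  set zm := (partZ lam T h A mid).toReal
  have hzu : 0 < zu := ENNReal.toReal_pos (hposA θ₀) hZA0
  have hzv : 0 < zv := ENNReal.toReal_pos (hposA θ₁) hZA1
  have hzm : 0 < zm := ENNReal.toReal_pos (hposA mid) hZmt
  have hc : 0 < (P A).toReal := ENNReal.toReal_pos hPA.ne' (measure_ne_top P A)
  have hlogsq : Real.log (zm^2) = 2 * Real.log zm := by
    rw [Real.log_pow]; norm_num
  have hsummid : (∑ j, mid j * ∫ x in A, T x j ∂P)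
      = ((∑ j, θ₀ j * ∫ x in A, T x j ∂P) + ∑ j, θ₁ j * ∫ x in A, T x j ∂P)/2 :=
    sum_mid θ₀ θ₁ _
  have hMle : (truncM lam T h A P θ₀ + truncM lam T h A P θ₁)/2
      ≤ truncM lam T h A P mid := by
    have hlog : 2 * Real.log zm ≤ Real.log zu + Real.log zv := by
      have := Real.log_le_log (by positivity) hcs
      rwa [hlogsq, Real.log_mul hzu.ne' hzv.ne'] at this
    unfold truncM
    rw [hsummid]
    nlinarith [hc, hlog]
  refine ⟨hfin, hMle, fun hnc hne => ?_⟩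
  have hne' : zm ^ 2 ≠ zu * zv := by
    intro heq
    have hae := heqc heq
    set a : Fin d → ℝ := θ₀ - θ₁ with hadef
    have ha : a ≠ 0 := sub_ne_zero.mpr hne
    set b : ℝ := 2 * Real.log (zm / zv) with hbdef
    have hS := hnc a ha b
    set S := {x | x ∈ A ∧ 0 < h x ∧ (∑ j, a j * T x j) ≠ b} with hSdef
    have hSA : S ⊆ A := fun x hx => hx.1
    rw [ae_iff] at hae
    have hsub : S ⊆ {x | ¬ (zv * (Real.exp ((∑ j, θ₀ j * T x j) / 2) * Real.sqrt (h x))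
        = zm * (Real.exp ((∑ j, θ₁ j * T x j) / 2) * Real.sqrt (h x)))} := by
      intro x hx hcontra
      have hhx : 0 < h x := hx.2.1
      have hsq : 0 < Real.sqrt (h x) := Real.sqrt_pos.mpr hhx
      have h1 : zv * Real.exp ((∑ j, θ₀ j * T x j)/2)
          = zm * Real.exp ((∑ j, θ₁ j * T x j)/2) := by
        apply mul_right_cancel₀ hsq.ne'
        calc zv * Real.exp ((∑ j, θ₀ j * T x j)/2) * Real.sqrt (h x)
            = zv * (Real.exp ((∑ j, θ₀ j * T x j)/2) * Real.sqrt (h x)) := by ring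
          _ = zm * (Real.exp ((∑ j, θ₁ j * T x j)/2) * Real.sqrt (h x)) := hcontra
          _ = zm * Real.exp ((∑ j, θ₁ j * T x j)/2) * Real.sqrt (h x) := by ring
      have h2 := congrArg Real.log h1
      rw [Real.log_mul hzv.ne' (Real.exp_ne_zero _),
        Real.log_mul hzm.ne' (Real.exp_ne_zero _), Real.log_exp, Real.log_exp] at h2
      have h3 : (∑ j, a j * T x j) = b := by
        have h4 : (∑ j, a j * T x j)
            = (∑ j, θ₀ j * T x j) - ∑ j, θ₁ j * T x j := by
          rw [hadef]
          calc ∑ j, (θ₀ - θ₁) j * T x j = ∑ j, (θ₀ j - θ₁ j) * T x j := by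
                exact Finset.sum_congr rfl fun j _ => by rw [Pi.sub_apply]
            _ = _ := sum_sub' θ₀ θ₁ (T x)
        rw [h4, hbdef, Real.log_div hzm.ne' hzv.ne']
        linarith
      exact hx.2.2 h3
    have hz : (lam.restrict A) S = 0 := measure_mono_null hsub hae
    rw [Measure.restrict_apply' hA, inter_eq_self_of_subset_left hSA] at hz
    exact absurd hz hS.ne'
  have hlt : zm ^ 2 < zu * zv := lt_of_le_of_ne hcs hne'
  have hlog : 2 * Real.log zm < Real.log zu + Real.log zv := by
    have := Real.log_lt_log (by positivity) hlt
    rwa [hlogsq, Real.log_mul hzu.ne' hzv.ne'] at this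
  unfold truncM
  rw [hsummid]
  nlinarith [hc, hlog]

end mid

lemma sum_affine' {d : ℕ} (θ₀ θ₁ : Fin d → ℝ) (s : ℝ) (Tx : Fin d → ℝ) :
    ∑ j, (θ₀ j + s*(θ₁ j - θ₀ j)) * Tx j
      = (∑ j, θ₀ j * Tx j) + s * ((∑ j, θ₁ j * Tx j) - (∑ j, θ₀ j * Tx j)) := by
  have := sum_affine θ₀ θ₁ s Tx
  calc ∑ j, (θ₀ j + s*(θ₁ j - θ₀ j)) * Tx j
      = ∑ j, ((1-s)*θ₀ j + s*θ₁ j) * Tx j :=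
        Finset.sum_congr rfl fun j _ => by ring
    _ = _ := by rw [this]; ring

lemma tendsto_partZ_dyadic {p d : ℕ} (lam : Measure (EuclideanSpace ℝ (Fin p)))
    (T : EuclideanSpace ℝ (Fin p) → Fin d → ℝ) (h : EuclideanSpace ℝ (Fin p) → ℝ)
    (hT : Measurable T) (hh : Measurable h) (hh0 : 0 ≤ h)
    (B : Set (EuclideanSpace ℝ (Fin p))) (θhat θ : Fin d → ℝ)
    (hfin : partZ lam T h B θhat ≠ ⊤) (hfin' : partZ lam T h B θ ≠ ⊤) :
    Tendsto (fun n : ℕ => partZ lam T h B (fun j => θhat j + (2⁻¹:ℝ)^n * (θ j - θhat j)))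
      atTop (𝓝 (partZ lam T h B θhat)) := by
  unfold partZ
  apply tendsto_lintegral_of_dominated_convergence
    (bound := fun x => ENNReal.ofReal (Real.exp (∑ j, θhat j * T x j) * h x)
      + ENNReal.ofReal (Real.exp (∑ j, θ j * T x j) * h x))
  · exact fun n => measurable_gfun T h hT hh _
  · intro n
    filter_upwards with x
    have hs0 : (0:ℝ) ≤ (2⁻¹:ℝ)^n := by positivity
    have hs1 : ((2⁻¹:ℝ))^n ≤ 1 := pow_le_one₀ (by norm_num) (by norm_num)
    have he : ∑ j, (θhat j + (2⁻¹:ℝ)^n * (θ j - θhat j)) * T x j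
        = (1-(2⁻¹:ℝ)^n) * (∑ j, θhat j * T x j) + (2⁻¹:ℝ)^n * ∑ j, θ j * T x j := by
      rw [sum_affine' θhat θ ((2⁻¹:ℝ)^n) (T x)]; ring
    rw [he]
    exact conv_ptwise _ _ _ _ hs0 hs1 (hh0 x)
  · rw [lintegral_add_left (measurable_gfun T h hT hh θhat)]
    exact ENNReal.add_ne_top.mpr ⟨hfin, hfin'⟩
  · filter_upwards with x
    set U := ∑ j, θhat j * T x j with hUdef
    set V := ∑ j, θ j * T x j with hVdef
    have hkey : ∀ s : ℝ, ∑ j, (θhat j + s * (θ j - θhat j)) * T x j = U + s * (V - U) :=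
      fun s => sum_affine' θhat θ s (T x)
    have hcont : Continuous fun s : ℝ => ENNReal.ofReal (Real.exp (U + s * (V - U)) * h x) := by
      apply ENNReal.continuous_ofReal.comp
      exact (Real.continuous_exp.comp
        (continuous_const.add (continuous_id.mul continuous_const))).mul continuous_const
    have hlim : Tendsto (fun n : ℕ => ((2:ℝ)⁻¹)^n) atTop (𝓝 0) := by
      apply tendsto_pow_atTop_nhds_zero_of_lt_one <;> norm_num
    have h2 := (hcont.tendsto 0).comp hlim
    simp only [Function.comp_def] at h2
    rw [show U + (0:ℝ) * (V - U) = U by ring] at h2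
    exact h2.congr fun n => by rw [hkey]

theorem truncM_interior_constrained_maximizer {p d : ℕ}
    (lam : Measure (EuclideanSpace ℝ (Fin p))) [SigmaFinite lam]
    (T : EuclideanSpace ℝ (Fin p) → Fin d → ℝ) (h : EuclideanSpace ℝ (Fin p) → ℝ)
    (hT : Measurable T) (hh : Measurable h) (hh0 : 0 ≤ h)
    (A : Set (EuclideanSpace ℝ (Fin p))) (hA : MeasurableSet A)
    (hnc : ∀ a : Fin d → ℝ, a ≠ 0 → ∀ b : ℝ,
      0 < lam {x | x ∈ A ∧ 0 < h x ∧ (∑ j, a j * T x j) ≠ b})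
    (P : Measure (EuclideanSpace ℝ (Fin p))) [IsProbabilityMeasure P]
    (hPA : 0 < P A)
    (hint : ∀ j, IntegrableOn (fun x => T x j) A P)
    (α : ℝ) (hα : 0 < α)
    (θhat : Fin d → ℝ) (hθhat : partZ lam T h Set.univ θhat < ⊤)
    (h025 : α < expFamProb lam T h A θhat)
    (hmax : ∀ θ : Fin d → ℝ, partZ lam T h Set.univ θ < ⊤ →
      α ≤ expFamProb lam T h A θ → truncM lam T h A P θ ≤ truncM lam T h A P θhat) :
    (∀ θ : Fin d → ℝ, partZ lam T h Set.univ θ < ⊤ → α ≤ expFamProb lam T h A θ →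
      truncM lam T h A P θ = truncM lam T h A P θhat → θ = θhat) ∧
    (∀ θ : Fin d → ℝ, partZ lam T h Set.univ θ < ⊤ →
      truncM lam T h A P θ ≤ truncM lam T h A P θhat) := by
  rcases Nat.eq_zero_or_pos d with hd | hd
  · subst hd
    have hsub : ∀ θ : Fin 0 → ℝ, θ = θhat := fun θ => funext fun j => j.elim0
    exact ⟨fun θ _ _ _ => hsub θ, fun θ _ => by rw [hsub θ]⟩
  · have hposA : ∀ θ : Fin d → ℝ, partZ lam T h A θ ≠ 0 := by
      intro θ
      have i0 : Fin d := ⟨0, hd⟩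
      set a : Fin d → ℝ := fun _ => 1 with hadef
      have ha : a ≠ 0 := by
        intro hc
        have := congrFun hc i0
        rw [hadef] at this
        norm_num at this
      have hS := hnc a ha 0
      set S := {x | x ∈ A ∧ 0 < h x ∧ (∑ j, a j * T x j) ≠ 0} with hSdef
      have hSA : S ⊆ A := fun x hx => hx.1
      have hSr : 0 < (lam.restrict A) S := by
        rw [Measure.restrict_apply' hA, inter_eq_self_of_subset_left hSA]; exact hS
      refine (pos_aux (lam.restrict A) _ (measurable_gfun T h hT hh θ) S hSr ?_).ne'
      intro x hx
      have : 0 < Real.exp (∑ j, θ j * T x j) * h x := mul_pos (Real.exp_pos _) hx.2.1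
      exact (ENNReal.ofReal_pos.mpr this).ne'
    have key : ∀ θ : Fin d → ℝ, partZ lam T h Set.univ θ < ⊤ →
        truncM lam T h A P θ ≤ truncM lam T h A P θhat := by
      intro θ hθfin
      by_contra hlt
      push_neg at hlt
      set θs : ℕ → Fin d → ℝ := fun n j => θhat j + (2⁻¹:ℝ)^n * (θ j - θhat j) with hθs
      have hstep : ∀ n, θs (n+1) = fun j => (θhat j + θs n j)/2 := by
        intro n; funext j
        show θhat j + (2⁻¹:ℝ)^(n+1) * (θ j - θhat j)
          = (θhat j + (θhat j + (2⁻¹:ℝ)^n * (θ j - θhat j)))/2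
        ring
      have hind : ∀ n, partZ lam T h Set.univ (θs n) < ⊤ ∧
          truncM lam T h A P θhat
            + (2⁻¹:ℝ)^n * (truncM lam T h A P θ - truncM lam T h A P θhat)
            ≤ truncM lam T h A P (θs n) := by
        intro n
        induction n with
        | zero =>
          have h0 : θs 0 = θ := funext fun j => by
            show θhat j + (2⁻¹:ℝ)^0 * (θ j - θhat j) = θ j; ring
          rw [h0]
          exact ⟨hθfin, by norm_num⟩
        | succ n ih =>
          have hmid := mid_aux lam T h hT hh hh0 A hA P hPA hposA θhat (θs n) hθhat ih.1
          rw [← hstep n] at hmid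
          refine ⟨hmid.1, ?_⟩
          have h2 := hmid.2.1
          have hp : (2⁻¹:ℝ)^(n+1) = (2⁻¹:ℝ)^n / 2 := by ring
          rw [hp]
          linarith [ih.2]
      have hZAhat_fin : partZ lam T h A θhat ≠ ⊤ :=
        ((partZ_mono_set lam T h hT hh A θhat).trans_lt hθhat).ne
      have hZAθ_fin : partZ lam T h A θ ≠ ⊤ :=
        ((partZ_mono_set lam T h hT hh A θ).trans_lt hθfin).ne
      have hZU0 : partZ lam T h Set.univ θhat ≠ 0 := by
        intro hc
        exact hposA θhat (nonpos_iff_eq_zero.mp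
          (hc ▸ partZ_mono_set lam T h hT hh A θhat))
      have htA := tendsto_partZ_dyadic lam T h hT hh hh0 A θhat θ hZAhat_fin hZAθ_fin
      have htU := tendsto_partZ_dyadic lam T h hT hh hh0 Set.univ θhat θ hθhat.ne hθfin.ne
      have htA' : Tendsto (fun n => (partZ lam T h A (θs n)).toReal) atTop
          (𝓝 (partZ lam T h A θhat).toReal) :=
        (ENNReal.tendsto_toReal hZAhat_fin).comp htA
      have htU' : Tendsto (fun n => (partZ lam T h Set.univ (θs n)).toReal) atTop
          (𝓝 (partZ lam T h Set.univ θhat).toReal) :=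
        (ENNReal.tendsto_toReal hθhat.ne).comp htU
      have hdiv : Tendsto (fun n =>
            (partZ lam T h A (θs n)).toReal / (partZ lam T h Set.univ (θs n)).toReal)
          atTop (𝓝 (expFamProb lam T h A θhat)) :=
        htA'.div htU' (ENNReal.toReal_ne_zero.mpr ⟨hZU0, hθhat.ne⟩)
      have hev : ∀ᶠ n in atTop, α <
          (partZ lam T h A (θs n)).toReal / (partZ lam T h Set.univ (θs n)).toReal :=
        hdiv.eventually (eventually_gt_nhds h025)
      obtain ⟨n, hn⟩ := hev.exists
      have hfeas : α ≤ expFamProb lam T h A (θs n) := le_of_lt hn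
      have hle := hmax (θs n) (hind n).1 hfeas
      have hpow : (0:ℝ) < (2⁻¹:ℝ)^n := by positivity
      nlinarith [(hind n).2]
    refine ⟨?_, key⟩
    intro θ hθfin hθfeas heqM
    by_contra hne
    have hmid := mid_aux lam T h hT hh hh0 A hA P hPA hposA θ θhat hθfin hθhat
    have hstrict := hmid.2.2 hnc hne
    have hk := key _ hmid.1
    linarith [heqM, hstrict, hk]
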